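/- arXiv:1903.07208 — 4 statements merged into one kernel-verified Lean document; each statement's English description precedes it below -/
import Mathlib

section
/- Lepski-type adaptation for Huber regression: under the linear model and Condition 2.1, let 0 < v_min ≤ σ ≤ v_max, a > 1, v_j = v_min·a^j, J = { j ∈ ℤ : v_min ≤ v_j < a·v_max }, and for j ∈ J let θ̂^{(j)} be the Huber estimator with τ_j = v_j √(n/(d+t)). Define ĵ_L := min{ j ∈ J : ‖θ̂^{(k)} − θ̂^{(j)}‖₂ ≤ c₀ v_k √((d+t)/n) for all k ∈ J with k > j } and θ̂_L := θ̂^{(ĵ_L)}. If c₀ ≥ 2c₁·λ_min(Σ)^{−1/2} where c₁ is the constant from the deviation bound of Theorem 2.1, then for any t > 0, provided n ≳ d+t, with probability at least 1 − 3·log_a(a·v_max/v_min)·e^{−t} one has ‖θ̂_L − θ*‖₂ ≤ (3a/2)·c₀·σ·√((d+t)/n). -/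
/-!
For every grid scale `v_j ≥ σ`, Theorem 2.1 puts the Huber estimator within
`r_j = c₁ λ_min^{-1/2} v_j √((d+t)/n) ≤ (c₀/2) v_j √((d+t)/n)` of `θ*` with probability at least
`1 - 3e^{-t}`. There is an oracle index `j₀` with `σ ≤ v_{j₀} ≤ aσ` from which on at most
`log_a(a v_max / v_min)` grid points remain, so a union bound makes all these bounds hold at once.
On that event `j₀` passes Lepski's test, hence `ĵ_L ≤ j₀`, and the triangle inequality through
`θ̂^{(j₀)}` gives `‖θ̂_L - θ*‖₂ ≤ (3/2) c₀ v_{j₀} √((d+t)/n) ≤ (3a/2) c₀ σ √((d+t)/n)`.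

The deviation bound is available for every selection of minimisers, measurable or not, so it is
applied to a worst-case selection; the event that all minimisers are close is measurable because
the empirical loss is continuous in `θ`.
-/

open MeasureTheory ProbabilityTheory Filter

noncomputable section

/-- The Huber loss with robustification parameter `τ`. -/
def huberLoss (τ u : ℝ) : ℝ := if |u| ≤ τ then u ^ 2 / 2 else τ * |u| - τ ^ 2 / 2

/-- Euclidean inner product on `Fin d → ℝ`. -/
def dotp {d : ℕ} (u v : Fin d → ℝ) : ℝ := ∑ j, u j * v j

/-- Euclidean (ℓ²) norm on `Fin d → ℝ`. -/
def l2norm {d : ℕ} (v : Fin d → ℝ) : ℝ := Real.sqrt (∑ j, v j ^ 2)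

/-- The empirical Huber loss `L_τ(θ) = ∑ᵢ ℓ_τ(Yᵢ − Xᵢᵀθ)`. -/
def empHuberLoss {Ω : Type*} {d n : ℕ} (τ : ℝ) (Y : Fin n → Ω → ℝ)
    (X : Fin n → Ω → Fin d → ℝ) (ω : Ω) (θ : Fin d → ℝ) : ℝ :=
  ∑ i, huberLoss τ (Y i ω - dotp (X i ω) θ)

open scoped ENNReal

lemma continuous_huberLoss (τ : ℝ) : Continuous (huberLoss τ) :=
  Continuous.if_le (by fun_prop) (by fun_prop) continuous_abs continuous_const
    fun u hu => by rw [← hu, ← sq_abs]; ring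

lemma continuous_empHuberLoss {Ω : Type*} {d n : ℕ} (τ : ℝ) (Y : Fin n → Ω → ℝ)
    (X : Fin n → Ω → Fin d → ℝ) (ω : Ω) : Continuous (empHuberLoss τ Y X ω) := by
  unfold empHuberLoss dotp
  have := continuous_huberLoss τ
  fun_prop

lemma measurable_empHuberLoss {Ω : Type*} [MeasurableSpace Ω] {d n : ℕ} (τ : ℝ)
    {Y : Fin n → Ω → ℝ} {X : Fin n → Ω → Fin d → ℝ} (hY : ∀ i, Measurable (Y i))
    (hX : ∀ i, Measurable (X i)) (θ : Fin d → ℝ) :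
    Measurable fun ω => empHuberLoss τ Y X ω θ := by
  unfold empHuberLoss dotp
  have := (continuous_huberLoss τ).measurable
  fun_prop

lemma l2norm_sub_eq_dist {d : ℕ} (u v : Fin d → ℝ) :
    l2norm (u - v) = dist (WithLp.toLp 2 u) (WithLp.toLp 2 v) := by
  simp [l2norm, EuclideanSpace.dist_eq, Real.dist_eq, sq_abs]

lemma continuous_l2norm {d : ℕ} : Continuous (l2norm (d := d)) := by
  unfold l2norm
  fun_prop

section Minimizers

variable {E β : Type*} [TopologicalSpace E] [CompleteLinearOrder β] [TopologicalSpace β]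

lemma iInf_le_of_mem_closure [ClosedIciTopology β] {f : E → β} (hf : Continuous f) {c : Set E}
    {x : E} (hx : x ∈ closure c) : ⨅ q : c, f q ≤ f x :=
  closure_minimal (fun q hq => iInf_le (fun q : c => f q) ⟨q, hq⟩) (isClosed_Ici.preimage hf) hx

lemma forall_le_iff_le_iInf_of_dense [ClosedIciTopology β] {f : E → β} (hf : Continuous f)
    {D : Set E} (hD : Dense D) (x : E) : (∀ y, f x ≤ f y) ↔ f x ≤ ⨅ q : D, f q :=
  ⟨fun h => le_iInf fun q => h q,
    fun h y => h.trans (iInf_le_of_mem_closure hf (hD.closure_eq ▸ Set.mem_univ y))⟩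

lemma IsCompact.exists_le_iff_of_subset_closure [OrderTopology β] {f : E → β} (hf : Continuous f)
    {K T : Set E} (hK : IsCompact K) (hTK : T ⊆ K) (hKT : K ⊆ closure T) (b : β) :
    (∃ x ∈ K, f x ≤ b) ↔ K.Nonempty ∧ ⨅ q : T, f q ≤ b := by
  constructor
  · rintro ⟨x, hxK, hxb⟩
    exact ⟨⟨x, hxK⟩, (iInf_le_of_mem_closure hf (hKT hxK)).trans hxb⟩
  · rintro ⟨hne, hb⟩
    obtain ⟨x, hxK, hmin⟩ := hK.exists_isMinOn hne hf.continuousOn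
    exact ⟨x, hxK, (le_iInf fun q : T => hmin (hTK q.2)).trans hb⟩

end Minimizers

/-- Continuity lets both the minimum value of `L ω` and its infimum over each compact piece of
`Sᶜ` be computed along countable dense sets. -/
lemma measurableSet_forall_isMin_mem {Ω E : Type*} [MeasurableSpace Ω] [TopologicalSpace E]
    [LocallyCompactSpace E] [SecondCountableTopology E] [TopologicalSpace.PseudoMetrizableSpace E]
    {L : Ω → E → ℝ} (hmeas : ∀ x, Measurable fun ω => L ω x) (hcont : ∀ ω, Continuous (L ω))
    {S : Set E} (hS : IsClosed S) :
    MeasurableSet {ω | ∀ x, (∀ y, L ω x ≤ L ω y) → x ∈ S} := by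
  obtain ⟨K, hK, hKS⟩ : IsSigmaCompact Sᶜ := by
    have := hS.isOpen_compl.locallyCompactSpace
    exact isSigmaCompact_iff_sigmaCompactSpace.2 inferInstance
  obtain ⟨D, hDc, hD⟩ := TopologicalSpace.exists_countable_dense E
  choose T hTK hTc hKT using fun n =>
    (TopologicalSpace.IsSeparable.of_separableSpace (K n)).exists_countable_dense_subset
  -- Passing to `EReal` makes all infima below meaningful.
  let F : Ω → E → EReal := fun ω x => L ω x
  have hF : ∀ ω, Continuous (F ω) := fun ω => continuous_coe_real_ereal.comp (hcont ω)
  have hFm : ∀ x, Measurable fun ω => F ω x := fun x => measurable_coe_real_ereal.comp (hmeas x)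
  have hset : {ω | ∀ x, (∀ y, L ω x ≤ L ω y) → x ∈ S}ᶜ =
      ⋃ n, {ω | (K n).Nonempty ∧ ⨅ q : T n, F ω q ≤ ⨅ q : D, F ω q} := by
    have hSc : ∀ x, x ∉ S ↔ ∃ n, x ∈ K n := fun x => by
      rw [← Set.mem_compl_iff, ← hKS, Set.mem_iUnion]
    ext ω
    simp only [Set.mem_compl_iff, Set.mem_ofPred_eq, Set.mem_iUnion, not_forall, exists_prop, hSc,
      ← (hK _).exists_le_iff_of_subset_closure (hF ω) (hTK _) (hKT _),
      ← forall_le_iff_le_iInf_of_dense (hF ω) hD, F, EReal.coe_le_coe_iff]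
    exact ⟨fun ⟨x, hx, n, hn⟩ => ⟨n, x, hn, hx⟩, fun ⟨n, x, hn, hx⟩ => ⟨x, hx, n, hn⟩⟩
  have hInf : ∀ C : Set E, C.Countable → Measurable fun ω => ⨅ q : C, F ω q := fun C hC =>
    have := hC.to_subtype
    Measurable.iInf fun q => hFm q
  rw [← compl_compl {ω | _}, hset]
  exact (MeasurableSet.iUnion fun n =>
    (MeasurableSet.const _).inter (measurableSet_le (hInf _ (hTc n)) (hInf D hDc))).compl

lemma measurableSet_setOf_forall_huber_minimizer_near {Ω : Type*} [MeasurableSpace Ω] {d n : ℕ}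
    {Y : Fin n → Ω → ℝ} {X : Fin n → Ω → Fin d → ℝ} (hY : ∀ i, Measurable (Y i))
    (hX : ∀ i, Measurable (X i)) (τ r : ℝ) (θ₀ : Fin d → ℝ) :
    MeasurableSet {ω | ∀ θ, (∀ θ', empHuberLoss τ Y X ω θ ≤ empHuberLoss τ Y X ω θ') →
      l2norm (θ - θ₀) ≤ r} :=
  measurableSet_forall_isMin_mem (measurable_empHuberLoss τ hY hX)
    (continuous_empHuberLoss τ Y X) (S := {θ | l2norm (θ - θ₀) ≤ r})
    (isClosed_le (continuous_l2norm.comp (continuous_id.sub continuous_const)) continuous_const)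

section Probability

variable {Ω : Type*} [MeasurableSpace Ω] (μ : Measure Ω)

/-- Select a disqualified witness wherever one exists. -/
lemma le_measure_setOf_forall_of_forall_selection {α : Type*} {P Q : Ω → α → Prop}
    (hP : ∀ ω, ∃ x, P ω x) {c : ℝ≥0∞}
    (h : ∀ f : Ω → α, (∀ ω, P ω (f ω)) → c ≤ μ {ω | Q ω (f ω)}) :
    c ≤ μ {ω | ∀ x, P ω x → Q ω x} := by
  have worst : ∀ ω, ∃ x, P ω x ∧ (Q ω x → ∀ y, P ω y → Q ω y) := by
    intro ω
    by_cases hall : ∀ y, P ω y → Q ω y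
    · obtain ⟨x, hx⟩ := hP ω
      exact ⟨x, hx, fun _ => hall⟩
    · push Not at hall
      obtain ⟨x, hPx, hQx⟩ := hall
      exact ⟨x, hPx, fun hq => absurd hq hQx⟩
  choose f hfP hfQ using worst
  exact (h f hfP).trans (measure_mono fun ω hω => hfQ ω hω)

lemma ofReal_one_sub_card_mul_le_measure_biInter [IsProbabilityMeasure μ] {ι : Type*}
    (S : Finset ι) {s : ι → Set Ω} (hs : ∀ j ∈ S, MeasurableSet (s j)) {p : ℝ} (hp : 0 ≤ p)
    (h : ∀ j ∈ S, ENNReal.ofReal (1 - p) ≤ μ (s j)) :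
    ENNReal.ofReal (1 - S.card * p) ≤ μ (⋂ j ∈ S, s j) := by
  have hcompl : ∀ j ∈ S, μ (s j)ᶜ ≤ ENNReal.ofReal p := by
    intro j hj
    rw [prob_compl_eq_one_sub (hs j hj), tsub_le_iff_right]
    calc (1 : ℝ≥0∞) = ENNReal.ofReal (p + (1 - p)) := by simp
      _ ≤ ENNReal.ofReal p + ENNReal.ofReal (1 - p) := ENNReal.ofReal_add_le
      _ ≤ ENNReal.ofReal p + μ (s j) := add_le_add_right (h j hj) _
  have hunion : μ (⋂ j ∈ S, s j)ᶜ ≤ ENNReal.ofReal (S.card * p) := by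
    rw [Set.compl_iInter₂]
    calc μ (⋃ j ∈ S, (s j)ᶜ) ≤ ∑ j ∈ S, μ (s j)ᶜ := measure_biUnion_finset_le _ _
      _ ≤ ∑ _j ∈ S, ENNReal.ofReal p := Finset.sum_le_sum hcompl
      _ = ENNReal.ofReal (S.card * p) := by
        rw [Finset.sum_const, nsmul_eq_mul, ENNReal.ofReal_mul (Nat.cast_nonneg _),
          ENNReal.ofReal_natCast]
  have hmeas : MeasurableSet (⋂ j ∈ S, s j) := Finset.measurableSet_biInter S hs
  rw [← compl_compl (⋂ j ∈ S, s j), prob_compl_eq_one_sub hmeas.compl,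
    ENNReal.ofReal_sub _ (by positivity), ENNReal.ofReal_one]
  exact tsub_le_tsub_left hunion 1

end Probability

section Lepski

variable {ι α : Type*} [LinearOrder ι] [PseudoMetricSpace α]

def lepskiSet (J : Set ι) (θ : ι → α) (T : ι → ℝ) : Set ι :=
  {j | j ∈ J ∧ ∀ k ∈ J, j < k → dist (θ k) (θ j) ≤ T k}

lemma dist_le_of_isLeast_lepskiSet {J : Set ι} {θ : ι → α} {T : ι → ℝ} (hT : MonotoneOn T J)
    {θ₀ : α} {j₀ ĵ : ι} (hj₀ : j₀ ∈ J) (hclose : ∀ k ∈ J, j₀ ≤ k → dist (θ k) θ₀ ≤ T k / 2)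
    (hĵ : IsLeast (lepskiSet J θ T) ĵ) : dist (θ ĵ) θ₀ ≤ 3 / 2 * T j₀ := by
  have hj₀_close := hclose j₀ hj₀ le_rfl
  have hj₀_mem : j₀ ∈ lepskiSet J θ T := by
    refine ⟨hj₀, fun k hk hlt => ?_⟩
    calc dist (θ k) (θ j₀) ≤ dist (θ k) θ₀ + dist (θ j₀) θ₀ := dist_triangle_right _ _ _
      _ ≤ T k / 2 + T j₀ / 2 := add_le_add (hclose k hk hlt.le) hj₀_close
      _ ≤ T k := by linarith [hT hj₀ hk hlt.le]
  rcases (hĵ.2 hj₀_mem).lt_or_eq with hlt | rfl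
  · calc dist (θ ĵ) θ₀ ≤ dist (θ j₀) (θ ĵ) + dist (θ j₀) θ₀ := dist_triangle_left _ _ _
      _ ≤ T j₀ + T j₀ / 2 := add_le_add (hĵ.1.2 j₀ hj₀ hlt) hj₀_close
      _ = 3 / 2 * T j₀ := by ring
  · linarith [dist_nonneg (x := θ ĵ) (y := θ₀)]

end Lepski

section Grid

/-- The index set `J` of the candidate scales `v_j = v_min a ^ j`. -/
def lepskiGrid (vmin vmax a : ℝ) : Set ℤ := {j | vmin ≤ vmin * a ^ j ∧ vmin * a ^ j < a * vmax}

variable {vmin vmax a : ℝ}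

lemma mem_lepskiGrid_iff (hvmin : 0 < vmin) (hvmax : 0 < vmax) (ha : 1 < a) {j : ℤ} :
    j ∈ lepskiGrid vmin vmax a ↔ 0 ≤ j ∧ j < ⌈Real.logb a (a * vmax / vmin)⌉ := by
  have hpos : 0 < a * vmax / vmin := by positivity
  rw [lepskiGrid, Set.mem_ofPred_eq, le_mul_iff_one_le_right hvmin, one_le_zpow_iff_right₀ ha,
    ← lt_div_iff₀' hvmin, ← Real.rpow_intCast, ← Real.lt_logb_iff_rpow_lt ha hpos, Int.lt_ceil]

/-- Starting at `⌊s⌋ + 1` rather than `⌈s⌉` keeps the count `⌈L⌉ - j` below `L`; the cap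
`⌈L⌉ - 1` only applies when `s + 1 = L` is an integer. -/
lemma exists_int_mem_Icc_ceil_sub_le (s L : ℝ) (hs : 0 ≤ s) (hL : s + 1 ≤ L) :
    ∃ j : ℤ, s ≤ j ∧ (j : ℝ) ≤ s + 1 ∧ j < ⌈L⌉ ∧ ((⌈L⌉ - j : ℤ) : ℝ) ≤ L := by
  have hfloor := Int.floor_le s
  have hfloor' := Int.lt_floor_add_one s
  have hceil := Int.le_ceil L
  have hceil' := Int.ceil_lt_add_one L
  have hfloor0 : 0 ≤ ⌊s⌋ := Int.floor_nonneg.2 hs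
  refine ⟨min (⌊s⌋ + 1) (⌈L⌉ - 1), ?_, ?_, by omega, ?_⟩
  · rcases min_cases (⌊s⌋ + 1) (⌈L⌉ - 1) with ⟨h, _⟩ | ⟨h, _⟩ <;> rw [h] <;> push_cast <;> linarith
  · have : ((min (⌊s⌋ + 1) (⌈L⌉ - 1) : ℤ) : ℝ) ≤ ⌊s⌋ + 1 := by exact_mod_cast min_le_left _ _
    linarith
  · rcases min_cases (⌊s⌋ + 1) (⌈L⌉ - 1) with ⟨h, _⟩ | ⟨h, _⟩ <;> rw [h] <;> push_cast
    · have : (0 : ℝ) ≤ ⌊s⌋ := by exact_mod_cast hfloor0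
      linarith
    · linarith

lemma exists_lepski_oracle_index {σ : ℝ} (hvmin : 0 < vmin) (hσ : vmin ≤ σ) (hσ' : σ ≤ vmax)
    (ha : 1 < a) :
    ∃ j₀ ∈ lepskiGrid vmin vmax a, σ ≤ vmin * a ^ j₀ ∧ vmin * a ^ j₀ ≤ a * σ ∧
      ∃ S : Finset ℤ, (S.card : ℝ) ≤ Real.logb a (a * vmax / vmin) ∧
        ∀ k, k ∈ S ↔ k ∈ lepskiGrid vmin vmax a ∧ j₀ ≤ k := by
  have ha0 : 0 < a := one_pos.trans ha
  have hσ0 : 0 < σ := hvmin.trans_le hσ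
  have hvmax : 0 < vmax := hσ0.trans_le hσ'
  set s := Real.logb a (σ / vmin)
  set L := Real.logb a (a * vmax / vmin)
  have has : a ^ (s + 1) = a * σ / vmin := by
    rw [Real.rpow_add ha0, Real.rpow_logb ha0 ha.ne' (by positivity), Real.rpow_one]; ring
  have hs : 0 ≤ s := Real.logb_nonneg ha ((one_le_div hvmin).2 hσ)
  have hL : s + 1 ≤ L := by
    rw [Real.le_logb_iff_rpow_le ha (by positivity), has]
    gcongr
  obtain ⟨j, hsj, hjs, hjL, hcard⟩ := exists_int_mem_Icc_ceil_sub_le s L hs hL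
  have hgrid : ∀ k, k ∈ lepskiGrid vmin vmax a ↔ 0 ≤ k ∧ k < ⌈L⌉ := fun k =>
    mem_lepskiGrid_iff hvmin hvmax ha
  have hj0 : 0 ≤ j := by exact_mod_cast hs.trans hsj
  refine ⟨j, (hgrid j).2 ⟨hj0, hjL⟩, ?_, ?_, Finset.Ico j ⌈L⌉, ?_, fun k => ?_⟩
  · rw [← div_le_iff₀' hvmin, ← Real.rpow_intCast, ← Real.logb_le_iff_le_rpow ha (by positivity)]
    exact hsj
  · rw [← le_div_iff₀' hvmin, ← has, ← Real.rpow_intCast]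
    exact Real.rpow_le_rpow_of_exponent_le ha.le hjs
  · rw [Int.card_Ico]
    convert hcard
    exact_mod_cast Int.toNat_of_nonneg (by omega)
  · rw [Finset.mem_Ico, hgrid]
    omega

end Grid

lemma l2norm_sub_le_of_lepski_selection {d : ℕ} {vmin vmax a : ℝ} {θ : ℤ → Fin d → ℝ}
    {θ₀ : Fin d → ℝ} {T : ℤ → ℝ} (hT : Monotone T) {j₀ ĵ : ℤ} (hj₀ : j₀ ∈ lepskiGrid vmin vmax a)
    (hclose : ∀ k ∈ lepskiGrid vmin vmax a, j₀ ≤ k → l2norm (θ k - θ₀) ≤ T k / 2)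
    (hĵ : (vmin ≤ vmin * a ^ ĵ ∧ vmin * a ^ ĵ < a * vmax) ∧
      (∀ k : ℤ, vmin ≤ vmin * a ^ k → vmin * a ^ k < a * vmax → ĵ < k →
        l2norm (θ k - θ ĵ) ≤ T k) ∧
      (∀ j : ℤ, vmin ≤ vmin * a ^ j → vmin * a ^ j < a * vmax →
        (∀ k : ℤ, vmin ≤ vmin * a ^ k → vmin * a ^ k < a * vmax → j < k →
          l2norm (θ k - θ j) ≤ T k) → ĵ ≤ j)) :
    l2norm (θ ĵ - θ₀) ≤ 3 / 2 * T j₀ := by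
  obtain ⟨hĵJ, htest, hmin⟩ := hĵ
  have hleast :
      IsLeast (lepskiSet (lepskiGrid vmin vmax a) (fun k => WithLp.toLp 2 (θ k)) T) ĵ := by
    refine ⟨⟨hĵJ, fun k hk hlt => ?_⟩,
      fun j ⟨hj, htest'⟩ => hmin j hj.1 hj.2 fun k hk₁ hk₂ hlt => ?_⟩
    · rw [← l2norm_sub_eq_dist]
      exact htest k hk.1 hk.2 hlt
    · rw [l2norm_sub_eq_dist]
      exact htest' k ⟨hk₁, hk₂⟩ hlt
  rw [l2norm_sub_eq_dist]
  refine dist_le_of_isLeast_lepskiSet (hT.monotoneOn _) hj₀ (fun k hk hj₀k => ?_) hleast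
  rw [← l2norm_sub_eq_dist]
  exact hclose k hk hj₀k

theorem lepski_adaptive_huber_general (A₀ : ℝ) :
    ∃ c : ℝ, 0 < c ∧
      ∀ (Ω : Type) [MeasurableSpace Ω] (μ : Measure Ω),
        IsProbabilityMeasure μ →
      ∀ (d n : ℕ) (X : Fin n → Ω → Fin d → ℝ) (Y : Fin n → Ω → ℝ)
        (θstar : Fin d → ℝ) (ε : Fin n → Ω → ℝ)
        (Sig Ssqrt Sinvsqrt : Matrix (Fin d) (Fin d) ℝ) (σ δ υ lmin : ℝ),
        -- measurability of the data
        (∀ i, Measurable (X i)) → (∀ i, Measurable (Y i)) →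
        -- the observations are i.i.d.
        iIndepFun (fun i ω => (Y i ω, X i ω)) μ →
        (∀ i i', IdentDistrib (fun ω => (Y i ω, X i ω))
            (fun ω => (Y i' ω, X i' ω)) μ μ) →
        -- linear model `Yᵢ = Xᵢᵀθ* + εᵢ`
        (∀ i ω, Y i ω = dotp (X i ω) θstar + ε i ω) →
        -- `Σ = E(X Xᵀ)` is positive definite, with square root `Σ^{1/2}` and its inverse
        (∀ i j k, Sig j k = ∫ ω, X i ω j * X i ω k ∂μ) →
        Sig.PosDef → Ssqrt.PosSemidef → Ssqrt * Ssqrt = Sig →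
        Ssqrt * Sinvsqrt = 1 → Sinvsqrt * Ssqrt = 1 →
        -- `lmin` is the smallest eigenvalue of `Σ`
        IsGreatest {l : ℝ | ∀ u : Fin d → ℝ, l * dotp u u ≤ dotp u (Sig.mulVec u)} lmin →
        0 < lmin →
        -- Condition 2.1(i): `Z = Σ^{-1/2} X` is sub-Gaussian
        (∀ i (u : Fin d → ℝ) (r : ℝ), 0 ≤ r →
          μ {ω | A₀ * l2norm u * r ≤ |dotp u (Sinvsqrt.mulVec (X i ω))|}
            ≤ ENNReal.ofReal (2 * Real.exp (-r ^ 2))) →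
        -- Condition 2.1(ii): conditional moments of the noise
        0 ≤ δ →
        (∀ i, μ[ε i | MeasurableSpace.comap (X i) inferInstance] =ᵐ[μ] 0) →
        (∀ i, μ[fun ω => ε i ω ^ 2 | MeasurableSpace.comap (X i) inferInstance]
            =ᵐ[μ] fun _ => σ ^ 2) →
        (∀ i, μ[fun ω => |ε i ω| ^ (2 + δ) | MeasurableSpace.comap (X i) inferInstance]
            ≤ᵐ[μ] fun _ => υ) →
      ∀ (t vmin vmax a c₀ c₁ : ℝ), 0 < t →
        0 < vmin → vmin ≤ σ → σ ≤ vmax → 1 < a →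
        -- the candidate Huber estimators `θ̂^{(j)}`, `j ∈ J`, with `τ_j = v_j √(n/(d+t))`
        ∀ θh : ℤ → Ω → Fin d → ℝ,
          (∀ j : ℤ, vmin ≤ vmin * a ^ j → vmin * a ^ j < a * vmax →
            ∀ ω θ, empHuberLoss (vmin * a ^ j * Real.sqrt ((n : ℝ) / ((d : ℝ) + t)))
                Y X ω (θh j ω)
              ≤ empHuberLoss (vmin * a ^ j * Real.sqrt ((n : ℝ) / ((d : ℝ) + t))) Y X ω θ) →
        -- `c₁` is the constant from the deviation bound of Theorem 2.1
        0 < c₁ →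
        (∀ v : ℝ, σ ≤ v →
          ∀ θv : Ω → Fin d → ℝ,
            (∀ ω θ, empHuberLoss (v * Real.sqrt ((n : ℝ) / ((d : ℝ) + t))) Y X ω (θv ω)
              ≤ empHuberLoss (v * Real.sqrt ((n : ℝ) / ((d : ℝ) + t))) Y X ω θ) →
            ENNReal.ofReal (1 - 3 * Real.exp (-t)) ≤
              μ {ω | l2norm (θv ω - θstar)
                  ≤ c₁ / Real.sqrt lmin * v * Real.sqrt (((d : ℝ) + t) / n)}) →
        -- the Lepski selection rule `ĵ_L`
        ∀ jhat : Ω → ℤ,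
          (∀ ω,
            (vmin ≤ vmin * a ^ jhat ω ∧ vmin * a ^ jhat ω < a * vmax) ∧
            (∀ k : ℤ, vmin ≤ vmin * a ^ k → vmin * a ^ k < a * vmax → jhat ω < k →
              l2norm (θh k ω - θh (jhat ω) ω)
                ≤ c₀ * (vmin * a ^ k) * Real.sqrt (((d : ℝ) + t) / n)) ∧
            (∀ j : ℤ, vmin ≤ vmin * a ^ j → vmin * a ^ j < a * vmax →
              (∀ k : ℤ, vmin ≤ vmin * a ^ k → vmin * a ^ k < a * vmax → j < k →
                l2norm (θh k ω - θh j ω)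
                  ≤ c₀ * (vmin * a ^ k) * Real.sqrt (((d : ℝ) + t) / n)) →
              jhat ω ≤ j)) →
        -- assumption on `c₀` and the sample-size requirement `n ≳ d + t`
        2 * c₁ / Real.sqrt lmin ≤ c₀ →
        c * ((d : ℝ) + t) ≤ (n : ℝ) →
        ENNReal.ofReal (1 - 3 * Real.logb a (a * vmax / vmin) * Real.exp (-t)) ≤
          μ {ω | l2norm (θh (jhat ω) ω - θstar)
              ≤ 3 * a / 2 * c₀ * σ * Real.sqrt (((d : ℝ) + t) / n)} := by
  refine ⟨1, one_pos, ?_⟩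
  intro Ω _ μ _ d n X Y θstar _ _ _ _ σ _ _ lmin hX hY _ _ _ _ _ _ _ _ _ _ _ _ _ _ _ _
    t vmin vmax a c₀ c₁ _ hvmin hσmin hσmax ha θh hθh hc₁ hdev jhat hjhat hc₀ _
  set sq := Real.sqrt (((d : ℝ) + t) / n)
  set v : ℤ → ℝ := fun k => vmin * a ^ k
  set good : ℤ → Set Ω := fun k => {ω | ∀ θ,
    (∀ θ', empHuberLoss (v k * Real.sqrt (n / (d + t))) Y X ω θ ≤
      empHuberLoss (v k * Real.sqrt (n / (d + t))) Y X ω θ') →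
    l2norm (θ - θstar) ≤ c₁ / Real.sqrt lmin * v k * sq}
  obtain ⟨j₀, hj₀, hσj₀, hj₀σ, S, hS, hmemS⟩ := exists_lepski_oracle_index hvmin hσmin hσmax ha
  have hv : Monotone v := fun j k hjk =>
    mul_le_mul_of_nonneg_left (zpow_le_zpow_right₀ ha.le hjk) hvmin.le
  have hc₀' : 0 ≤ c₀ := le_trans (by positivity) hc₀
  have hsq : 0 ≤ sq := Real.sqrt_nonneg _
  have hgood : ∀ k ∈ S, ENNReal.ofReal (1 - 3 * Real.exp (-t)) ≤ μ (good k) := fun k hk =>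
    have hk := (hmemS k).1 hk
    le_measure_setOf_forall_of_forall_selection μ (fun ω => ⟨θh k ω, hθh k hk.1.1 hk.1.2 ω⟩)
      (hdev _ (hσj₀.trans (hv hk.2)))
  have hselect : ∀ ω ∈ ⋂ k ∈ S, good k,
      l2norm (θh (jhat ω) ω - θstar) ≤ 3 * a / 2 * c₀ * σ * sq := fun ω hω => by
    refine (l2norm_sub_le_of_lepski_selection (T := fun k => c₀ * v k * sq)
      ((hv.const_mul hc₀').mul_const hsq) hj₀ (fun k hk hj₀k => ?_) (hjhat ω)).trans ?_
    · refine (Set.mem_iInter₂.1 hω k ((hmemS k).2 ⟨hk, hj₀k⟩) _ (hθh k hk.1 hk.2 ω)).trans ?_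
      have : c₁ / Real.sqrt lmin ≤ c₀ / 2 := by rw [mul_div_assoc] at hc₀; linarith
      have := mul_le_mul_of_nonneg_right this (by positivity : 0 ≤ v k * sq)
      linarith
    · have := mul_le_mul_of_nonneg_right (mul_le_mul_of_nonneg_left hj₀σ hc₀') hsq
      linarith
  calc ENNReal.ofReal (1 - 3 * Real.logb a (a * vmax / vmin) * Real.exp (-t))
      ≤ ENNReal.ofReal (1 - S.card * (3 * Real.exp (-t))) := by
        apply ENNReal.ofReal_le_ofReal
        nlinarith [Real.exp_pos (-t)]
    _ ≤ μ (⋂ k ∈ S, good k) := ofReal_one_sub_card_mul_le_measure_biInter μ S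
        (fun k _ => measurableSet_setOf_forall_huber_minimizer_near hY hX _ _ _) (by positivity)
        hgood
    _ ≤ _ := measure_mono hselect

/-- **Theorem 3.1 (Chen–Zhou 2019): Lepski-type adaptation for Huber regression.**
Under the linear model and Condition 2.1, with `0 < v_min ≤ σ ≤ v_max`, `a > 1`,
`v_j = v_min a^j`, `J = {j ∈ ℤ : v_min ≤ v_j < a v_max}`, Huber estimators `θ̂^{(j)}`
with `τ_j = v_j √(n/(d+t))`, and Lepski selection
`ĵ_L = min{j ∈ J : ‖θ̂^{(k)} − θ̂^{(j)}‖₂ ≤ c₀ v_k √((d+t)/n) ∀ k ∈ J, k > j}`: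
if `c₀ ≥ 2c₁ λ_min(Σ)^{−1/2}` with `c₁` the constant from the deviation bound of
Theorem 2.1, then for `t > 0`, provided `n ≳ d + t`, with probability at least
`1 − 3 log_a(a v_max/v_min) e^{−t}` one has
`‖θ̂_L − θ*‖₂ ≤ (3a/2) c₀ σ √((d+t)/n)`. -/
theorem lepski_adaptive_huber (A₀ : ℝ) (hA₀ : 0 < A₀) :
    ∃ c : ℝ, 0 < c ∧
      ∀ (Ω : Type) [MeasurableSpace Ω] (μ : Measure Ω),
        IsProbabilityMeasure μ →
      ∀ (d n : ℕ) (X : Fin n → Ω → Fin d → ℝ) (Y : Fin n → Ω → ℝ)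
        (θstar : Fin d → ℝ) (ε : Fin n → Ω → ℝ)
        (Sig Ssqrt Sinvsqrt : Matrix (Fin d) (Fin d) ℝ) (σ δ υ lmin : ℝ),
        -- measurability of the data
        (∀ i, Measurable (X i)) → (∀ i, Measurable (Y i)) →
        -- the observations are i.i.d.
        iIndepFun (fun i ω => (Y i ω, X i ω)) μ →
        (∀ i i', IdentDistrib (fun ω => (Y i ω, X i ω))
            (fun ω => (Y i' ω, X i' ω)) μ μ) →
        -- linear model `Yᵢ = Xᵢᵀθ* + εᵢ`
        (∀ i ω, Y i ω = dotp (X i ω) θstar + ε i ω) →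
        -- `Σ = E(X Xᵀ)` is positive definite, with square root `Σ^{1/2}` and its inverse
        (∀ i j k, Sig j k = ∫ ω, X i ω j * X i ω k ∂μ) →
        Sig.PosDef → Ssqrt.PosSemidef → Ssqrt * Ssqrt = Sig →
        Ssqrt * Sinvsqrt = 1 → Sinvsqrt * Ssqrt = 1 →
        -- `lmin` is the smallest eigenvalue of `Σ`
        IsGreatest {l : ℝ | ∀ u : Fin d → ℝ, l * dotp u u ≤ dotp u (Sig.mulVec u)} lmin →
        0 < lmin →
        -- Condition 2.1(i): `Z = Σ^{-1/2} X` is sub-Gaussian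
        (∀ i (u : Fin d → ℝ) (r : ℝ), 0 ≤ r →
          μ {ω | A₀ * l2norm u * r ≤ |dotp u (Sinvsqrt.mulVec (X i ω))|}
            ≤ ENNReal.ofReal (2 * Real.exp (-r ^ 2))) →
        -- Condition 2.1(ii): conditional moments of the noise
        0 ≤ δ →
        (∀ i, μ[ε i | MeasurableSpace.comap (X i) inferInstance] =ᵐ[μ] 0) →
        (∀ i, μ[fun ω => ε i ω ^ 2 | MeasurableSpace.comap (X i) inferInstance]
            =ᵐ[μ] fun _ => σ ^ 2) →
        (∀ i, μ[fun ω => |ε i ω| ^ (2 + δ) | MeasurableSpace.comap (X i) inferInstance]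
            ≤ᵐ[μ] fun _ => υ) →
      ∀ (t vmin vmax a c₀ c₁ : ℝ), 0 < t →
        0 < vmin → vmin ≤ σ → σ ≤ vmax → 1 < a →
        -- the candidate Huber estimators `θ̂^{(j)}`, `j ∈ J`, with `τ_j = v_j √(n/(d+t))`
        ∀ θh : ℤ → Ω → Fin d → ℝ,
          (∀ j : ℤ, vmin ≤ vmin * a ^ j → vmin * a ^ j < a * vmax →
            ∀ ω θ, empHuberLoss (vmin * a ^ j * Real.sqrt ((n : ℝ) / ((d : ℝ) + t)))
                Y X ω (θh j ω)
              ≤ empHuberLoss (vmin * a ^ j * Real.sqrt ((n : ℝ) / ((d : ℝ) + t))) Y X ω θ) →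
        -- `c₁` is the constant from the deviation bound of Theorem 2.1
        0 < c₁ →
        (∀ v : ℝ, σ ≤ v →
          ∀ θv : Ω → Fin d → ℝ,
            (∀ ω θ, empHuberLoss (v * Real.sqrt ((n : ℝ) / ((d : ℝ) + t))) Y X ω (θv ω)
              ≤ empHuberLoss (v * Real.sqrt ((n : ℝ) / ((d : ℝ) + t))) Y X ω θ) →
            ENNReal.ofReal (1 - 3 * Real.exp (-t)) ≤
              μ {ω | l2norm (θv ω - θstar)
                  ≤ c₁ / Real.sqrt lmin * v * Real.sqrt (((d : ℝ) + t) / n)}) →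
        -- the Lepski selection rule `ĵ_L`
        ∀ jhat : Ω → ℤ,
          (∀ ω,
            (vmin ≤ vmin * a ^ jhat ω ∧ vmin * a ^ jhat ω < a * vmax) ∧
            (∀ k : ℤ, vmin ≤ vmin * a ^ k → vmin * a ^ k < a * vmax → jhat ω < k →
              l2norm (θh k ω - θh (jhat ω) ω)
                ≤ c₀ * (vmin * a ^ k) * Real.sqrt (((d : ℝ) + t) / n)) ∧
            (∀ j : ℤ, vmin ≤ vmin * a ^ j → vmin * a ^ j < a * vmax →
              (∀ k : ℤ, vmin ≤ vmin * a ^ k → vmin * a ^ k < a * vmax → j < k →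
                l2norm (θh k ω - θh j ω)
                  ≤ c₀ * (vmin * a ^ k) * Real.sqrt (((d : ℝ) + t) / n)) →
              jhat ω ≤ j)) →
        -- assumption on `c₀` and the sample-size requirement `n ≳ d + t`
        2 * c₁ / Real.sqrt lmin ≤ c₀ →
        c * ((d : ℝ) + t) ≤ (n : ℝ) →
        ENNReal.ofReal (1 - 3 * Real.logb a (a * vmax / vmin) * Real.exp (-t)) ≤
          μ {ω | l2norm (θh (jhat ω) ω - θstar)
              ≤ 3 * a / 2 * c₀ * σ * Real.sqrt (((d : ℝ) + t) / n)} :=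
  lepski_adaptive_huber_general A₀

end
end

section
/- Concentration of the truncated sample mean at the population-level tuning scale: let X₁,…,Xₙ be i.i.d. copies of X with E(X) = 0 and Var(X) = σ² > 0, and let 1 ≤ t < n·P(|X| > 0). Let τ_t > 0 be the solution of E[min(X², τ²)]/τ² = t/n. Then, with probability at least 1 − 2e^{−t}, the truncated sample mean m̂_{τ_t} = (1/n) Σ_{i=1}^n ψ_{τ_t}(Xᵢ) satisfies both | m̂_{τ_t} − μ_{τ_t} | ≤ 1.75·σ_{τ_t}·√(t/n) and | m̂_{τ_t} | ≤ ( 0.75·σ_{τ_t} + σ²/σ_{τ_t} )·√(t/n), where μ_{τ_t} = E[ψ_{τ_t}(X)] and σ_{τ_t}² = E[ψ_{τ_t}²(X)]. -/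
/-!
Put `Yᵢ = ψ_τ(Xᵢ)`, so `|Yᵢ| ≤ τ`. On `[-1, 1]` one has `eˣ ≤ 1 + x + ¾x²`, hence
`E e^{±Yᵢ/τ} ≤ exp(±μ_τ/τ + ¾σ_τ²/τ²)`, and at `τ = τ_t` the defining equation reads
`nσ_τ²/τ² = t`. Chernoff's bound at `λ = ±1/τ` then gives `|∑ Yᵢ - nμ_τ| ≤ 1.75 τ t` outside an
event of probability `2e^{-t}`; since `τ t / n = σ_τ √(t/n)`, this is the first inequality.
For the second, `E X = 0` bounds the bias: `|μ_τ| = |E(ψ_τ(X) - X)| ≤ E(X² - min(X², τ²))/τ =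
(σ² - σ_τ²)/τ`.
-/

open MeasureTheory ProbabilityTheory

def truncate (τ u : ℝ) : ℝ := max (-τ) (min u τ)

section Truncate

variable {τ : ℝ}

lemma sign_mul_min_abs_eq_truncate (hτ : 0 ≤ τ) (u : ℝ) :
    Real.sign u * min |u| τ = truncate τ u := by
  unfold truncate
  rcases lt_trichotomy u 0 with h | rfl | h
  · rw [Real.sign_of_neg h, abs_of_neg h, neg_one_mul, ← max_neg_neg, neg_neg,
      min_eq_left (by linarith), max_comm]
  · simp [hτ]
  · rw [Real.sign_of_pos h, abs_of_pos h, one_mul, max_eq_right]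
    exact (neg_nonpos.mpr hτ).trans (le_min h.le hτ)

lemma measurable_truncate : Measurable (truncate τ) :=
  measurable_const.max (measurable_id.min measurable_const)

lemma abs_truncate_le (hτ : 0 ≤ τ) (u : ℝ) : |truncate τ u| ≤ τ :=
  abs_le.mpr ⟨le_max_left _ _, max_le (by linarith) (min_le_right _ _)⟩

lemma truncate_sq (hτ : 0 ≤ τ) (u : ℝ) : truncate τ u ^ 2 = min (u ^ 2) (τ ^ 2) := by
  unfold truncate
  rcases le_total u (-τ) with h | h
  · rw [min_eq_left (by linarith), max_eq_left h, min_eq_right (by nlinarith), neg_sq]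
  rcases le_total τ u with h' | h'
  · rw [min_eq_right h', max_eq_right (by linarith), min_eq_right (by nlinarith)]
  · rw [min_eq_left h', max_eq_right h, min_eq_left (by nlinarith)]

lemma abs_truncate_sub_mul_le (hτ : 0 ≤ τ) (u : ℝ) :
    |truncate τ u - u| * τ ≤ u ^ 2 - min (u ^ 2) (τ ^ 2) := by
  rw [← truncate_sq hτ]
  unfold truncate
  rcases le_total u (-τ) with h | h
  · rw [min_eq_left (by linarith), max_eq_left h, abs_of_nonneg (by linarith)]
    nlinarith
  rcases le_total τ u with h' | h'
  · rw [min_eq_right h', max_eq_right (by linarith), abs_of_nonpos (by linarith)]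
    nlinarith
  · rw [min_eq_left h', max_eq_right h]
    simp

end Truncate

lemma Real.exp_le_one_add_add_mul_sq {x : ℝ} (hx : |x| ≤ 1) :
    Real.exp x ≤ 1 + x + 3 / 4 * x ^ 2 := by
  have h := (abs_le.mp (Real.exp_bound hx two_pos)).2
  have hsum : ∑ m ∈ Finset.range 2, x ^ m / (m.factorial : ℝ) = 1 + x := by
    simp [Finset.sum_range_succ]
  rw [hsum, sq_abs] at h
  linarith

lemma abs_integral_truncate_mul_le {Ω : Type*} [MeasurableSpace Ω] {μ : Measure Ω}
    [IsFiniteMeasure μ] {X : Ω → ℝ} (hX : MemLp X 2 μ) (hmean : ∫ ω, X ω ∂μ = 0)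
    {τ : ℝ} (hτ : 0 ≤ τ) :
    |∫ ω, truncate τ (X ω) ∂μ| * τ ≤ ∫ ω, X ω ^ 2 ∂μ - ∫ ω, min (X ω ^ 2) (τ ^ 2) ∂μ := by
  have hXt2 : MemLp (fun ω => truncate τ (X ω)) 2 μ :=
    .of_bound (measurable_truncate.comp_aemeasurable hX.aemeasurable).aestronglyMeasurable τ
      (ae_of_all _ fun ω => abs_truncate_le hτ _)
  have hint_trunc : Integrable (fun ω => truncate τ (X ω)) μ := hXt2.integrable one_le_two
  have hint_min : Integrable (fun ω => min (X ω ^ 2) (τ ^ 2)) μ := by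
    simpa only [truncate_sq hτ] using hXt2.integrable_sq
  have hX1 : Integrable X μ := hX.integrable one_le_two
  calc |∫ ω, truncate τ (X ω) ∂μ| * τ = |∫ ω, (truncate τ (X ω) - X ω) ∂μ| * τ := by
        rw [integral_sub hint_trunc hX1, hmean, sub_zero]
    _ ≤ ∫ ω, |truncate τ (X ω) - X ω| * τ ∂μ := by
        rw [integral_mul_const]
        gcongr
        exact abs_integral_le_integral_abs
    _ ≤ ∫ ω, (X ω ^ 2 - min (X ω ^ 2) (τ ^ 2)) ∂μ :=
        integral_mono ((hint_trunc.sub hX1).abs.mul_const τ) (hX.integrable_sq.sub hint_min)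
          fun ω => abs_truncate_sub_mul_le hτ (X ω)
    _ = _ := integral_sub hX.integrable_sq hint_min

section Concentration

variable {Ω : Type*} [MeasurableSpace Ω] {μ : Measure Ω} [IsProbabilityMeasure μ]

lemma mgf_le_exp_of_abs_mul_le_one {Y : Ω → ℝ} {s : ℝ} (hY : MemLp Y 2 μ)
    (hs : ∀ᵐ ω ∂μ, |s * Y ω| ≤ 1) :
    mgf Y μ s ≤ Real.exp (s * ∫ ω, Y ω ∂μ + 3 / 4 * s ^ 2 * ∫ ω, Y ω ^ 2 ∂μ) := by
  have hY1 : Integrable Y μ := hY.integrable one_le_two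
  have hY2 : Integrable (fun ω => Y ω ^ 2) μ := hY.integrable_sq
  have hexp : Integrable (fun ω => Real.exp (s * Y ω)) μ := by
    refine .of_bound (hY.aestronglyMeasurable.aemeasurable.const_mul s).exp.aestronglyMeasurable
      (Real.exp 1) ?_
    filter_upwards [hs] with ω hω
    rw [Real.norm_eq_abs, Real.abs_exp]
    exact Real.exp_le_exp.mpr ((le_abs_self _).trans hω)
  have hquad : Integrable (fun ω => 1 + s * Y ω + 3 / 4 * s ^ 2 * Y ω ^ 2) μ :=
    ((integrable_const 1).add (hY1.const_mul s)).add (hY2.const_mul _)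
  calc mgf Y μ s ≤ ∫ ω, (1 + s * Y ω + 3 / 4 * s ^ 2 * Y ω ^ 2) ∂μ := by
        refine integral_mono_ae hexp hquad ?_
        filter_upwards [hs] with ω hω
        linarith [Real.exp_le_one_add_add_mul_sq hω]
    _ = 1 + (s * ∫ ω, Y ω ∂μ + 3 / 4 * s ^ 2 * ∫ ω, Y ω ^ 2 ∂μ) := by
        rw [integral_add (f := fun ω => 1 + s * Y ω)
            ((integrable_const 1).add (hY1.const_mul s)) (hY2.const_mul _),
          integral_add (integrable_const 1) (hY1.const_mul s), integral_const_mul,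
          integral_const_mul]
        simp [add_assoc]
    _ ≤ _ := Real.add_one_le_exp _ |>.trans_eq' (add_comm _ _)

variable {ι : Type*} [Fintype ι] {Y : ι → Ω → ℝ} {b : ℝ}

lemma measureReal_sum_ge_le_of_abs_le (hind : iIndepFun Y μ) (hmeas : ∀ i, Measurable (Y i))
    (hb : 0 < b) (hbd : ∀ i, ∀ᵐ ω ∂μ, |Y i ω| ≤ b) (a : ℝ) :
    μ.real {ω | ∑ i, ∫ ω, Y i ω ∂μ + a ≤ ∑ i, Y i ω} ≤
      Real.exp (-a / b + 3 / 4 * (∑ i, ∫ ω, Y i ω ^ 2 ∂μ) / b ^ 2) := by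
  set s := b⁻¹
  have hsY : ∀ i, ∀ᵐ ω ∂μ, |s * Y i ω| ≤ 1 := fun i => by
    filter_upwards [hbd i] with ω hω
    rw [abs_mul, abs_of_pos (inv_pos.mpr hb), inv_mul_le_one₀ hb]
    exact hω
  have hmgf : ∀ i, mgf (Y i) μ s ≤
      Real.exp (s * ∫ ω, Y i ω ∂μ + 3 / 4 * s ^ 2 * ∫ ω, Y i ω ^ 2 ∂μ) := fun i =>
    mgf_le_exp_of_abs_mul_le_one
      (.of_bound (hmeas i).aestronglyMeasurable b (hbd i)) (hsY i)
  have hint : Integrable (fun ω => Real.exp (s * (∑ i, Y i) ω)) μ := by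
    refine hind.integrable_exp_mul_sum hmeas fun i _ => ?_
    refine .of_bound ((hmeas i).const_mul s).exp.aestronglyMeasurable (Real.exp 1) ?_
    filter_upwards [hsY i] with ω hω
    rw [Real.norm_eq_abs, Real.abs_exp]
    exact Real.exp_le_exp.mpr ((le_abs_self _).trans hω)
  calc μ.real {ω | ∑ i, ∫ ω, Y i ω ∂μ + a ≤ ∑ i, Y i ω}
      ≤ Real.exp (-s * (∑ i, ∫ ω, Y i ω ∂μ + a)) * mgf (∑ i, Y i) μ s := by
        simpa using measure_ge_le_exp_mul_mgf _ (inv_pos.mpr hb).le hint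
    _ ≤ Real.exp (-s * (∑ i, ∫ ω, Y i ω ∂μ + a)) *
          Real.exp (∑ i, (s * ∫ ω, Y i ω ∂μ + 3 / 4 * s ^ 2 * ∫ ω, Y i ω ^ 2 ∂μ)) := by
        rw [hind.mgf_sum hmeas, Real.exp_sum]
        gcongr with i
        · exact fun i _ => mgf_nonneg
        · exact hmgf i
    _ = Real.exp (-a / b + 3 / 4 * (∑ i, ∫ ω, Y i ω ^ 2 ∂μ) / b ^ 2) := by
        rw [← Real.exp_add, Finset.sum_add_distrib, ← Finset.mul_sum, ← Finset.mul_sum]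
        congr 1
        simp only [s]
        field_simp
        ring

lemma measureReal_abs_sum_sub_gt_le_of_abs_le (hind : iIndepFun Y μ)
    (hmeas : ∀ i, Measurable (Y i)) (hb : 0 < b) (hbd : ∀ i, ∀ᵐ ω ∂μ, |Y i ω| ≤ b) (a : ℝ) :
    μ.real {ω | a < |∑ i, Y i ω - ∑ i, ∫ ω, Y i ω ∂μ|} ≤
      2 * Real.exp (-a / b + 3 / 4 * (∑ i, ∫ ω, Y i ω ^ 2 ∂μ) / b ^ 2) := by
  have hupper := measureReal_sum_ge_le_of_abs_le hind hmeas hb hbd a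
  have hlower := measureReal_sum_ge_le_of_abs_le (Y := fun i => -Y i)
    (hind.comp (fun _ => Neg.neg) fun _ => measurable_neg) (fun i => (hmeas i).neg) hb
    (fun i => by simpa only [Pi.neg_apply, abs_neg] using hbd i) a
  simp only [Pi.neg_apply, integral_neg, neg_sq, Finset.sum_neg_distrib] at hlower
  calc μ.real {ω | a < |∑ i, Y i ω - ∑ i, ∫ ω, Y i ω ∂μ|}
      ≤ μ.real ({ω | ∑ i, ∫ ω, Y i ω ∂μ + a ≤ ∑ i, Y i ω} ∪
          {ω | -∑ i, ∫ ω, Y i ω ∂μ + a ≤ -∑ i, Y i ω}) := by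
        refine measureReal_mono fun ω hω => ?_
        rcases lt_abs.mp (show a < |_| from hω) with h | h
        · exact Or.inl (by simp only [Set.mem_ofPred_eq]; linarith)
        · exact Or.inr (by simp only [Set.mem_ofPred_eq]; linarith)
    _ ≤ _ := (measureReal_union_le _ _).trans (by linarith)

lemma measureReal_abs_sum_truncate_sub_gt_le {X : ι → Ω → ℝ} {X0 : Ω → ℝ}
    (hind : iIndepFun X μ) (hmeas : ∀ i, Measurable (X i))
    (hident : ∀ i, IdentDistrib (X i) X0 μ μ) {τ : ℝ} (hτ : 0 < τ) (a : ℝ) :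
    μ.real {ω | a < |∑ i, truncate τ (X i ω) - Fintype.card ι * ∫ ω, truncate τ (X0 ω) ∂μ|} ≤
      2 * Real.exp (-a / τ +
        3 / 4 * (Fintype.card ι * ∫ ω, min (X0 ω ^ 2) (τ ^ 2) ∂μ) / τ ^ 2) := by
  have hmean : ∀ i, ∫ ω, truncate τ (X i ω) ∂μ = ∫ ω, truncate τ (X0 ω) ∂μ := fun i =>
    ((hident i).comp measurable_truncate).integral_eq
  have hsq : ∀ i, ∫ ω, truncate τ (X i ω) ^ 2 ∂μ = ∫ ω, min (X0 ω ^ 2) (τ ^ 2) ∂μ := fun i => by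
    simp_rw [← truncate_sq hτ.le]
    exact ((hident i).comp (measurable_truncate.pow_const 2)).integral_eq
  have h := measureReal_abs_sum_sub_gt_le_of_abs_le
    (hind.comp (fun _ => truncate τ) fun _ => measurable_truncate)
    (fun i => measurable_truncate.comp (hmeas i)) hτ
    (fun i => ae_of_all _ fun ω => abs_truncate_le hτ.le (X i ω)) a
  simpa only [Function.comp_apply, hmean, hsq, Finset.sum_const, Finset.card_univ,
    nsmul_eq_mul] using h

lemma ofReal_one_sub_le_of_measureReal_compl_le {s : Set Ω} {p : ℝ} (h : μ.real sᶜ ≤ p) :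
    ENNReal.ofReal (1 - p) ≤ μ s := by
  have hcover : 1 ≤ μ.real s + μ.real sᶜ := by
    simpa [Set.union_compl_self] using measureReal_union_le (μ := μ) s sᶜ
  rw [← ofReal_measureReal]
  exact ENNReal.ofReal_le_ofReal (by linarith)

end Concentration

lemma truncated_mean_bounds_of_abs_sum_sub_le {n t τ σ m S : ℝ} (hn : 0 < n) (ht : 0 < t)
    (hτ : 0 < τ) (hm : |m| * τ ≤ σ ^ 2 - τ ^ 2 * (t / n)) (hS : |S - n * m| ≤ 1.75 * τ * t) :
    |S / n - m| ≤ 1.75 * (τ * √(t / n)) * √(t / n) ∧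
      |S / n| ≤ (0.75 * (τ * √(t / n)) + σ ^ 2 / (τ * √(t / n))) * √(t / n) := by
  set r := √(t / n)
  have hr0 : 0 < r := by positivity
  have hrr : r * r = t / n := Real.mul_self_sqrt (by positivity)
  have hdev : |S / n - m| ≤ 1.75 * (τ * r) * r := by
    have hscale : 1.75 * (τ * r) * r * n = 1.75 * τ * t := by
      rw [show 1.75 * (τ * r) * r * n = 1.75 * τ * (r * r) * n by ring, hrr]
      field_simp
    rw [show S / n - m = (S - n * m) / n by field_simp, abs_div, abs_of_pos hn, div_le_iff₀ hn,
      hscale]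
    exact hS
  have hbias : |m| ≤ (σ ^ 2 / (τ * r) - τ * r) * r := by
    refine le_of_mul_le_mul_right ?_ hτ
    have : (σ ^ 2 / (τ * r) - τ * r) * r * τ = σ ^ 2 - τ ^ 2 * (t / n) := by
      rw [← hrr]
      field_simp
    linarith
  exact ⟨hdev, by linarith [abs_sub_abs_le_abs_sub (S / n) m]⟩

theorem truncated_mean_concentration_general
    {Ω : Type*} [MeasurableSpace Ω] (μ : Measure Ω) [IsProbabilityMeasure μ]
    (n : ℕ) (X : Fin n → Ω → ℝ) (X0 : Ω → ℝ)
    (hXm : ∀ i, Measurable (X i))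
    (hindep : iIndepFun X μ)
    (hident : ∀ i, IdentDistrib (X i) X0 μ μ)
    (hL2 : MemLp X0 2 μ) (hmean : ∫ ω, X0 ω ∂μ = 0)
    (σ : ℝ) (hσ : σ ^ 2 = ∫ ω, X0 ω ^ 2 ∂μ)
    (t : ℝ) (ht1 : 1 ≤ t) (ht : t < (n : ℝ) * (μ {ω | 0 < |X0 ω|}).toReal)
    (τt : ℝ) (hτpos : 0 < τt)
    (hτ : (∫ ω, min (X0 ω ^ 2) (τt ^ 2) ∂μ) / τt ^ 2 = t / n)
    (mhat : Ω → ℝ)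
    (hmhat : ∀ ω, mhat ω = (1 / (n : ℝ)) * ∑ i, Real.sign (X i ω) * min |X i ω| τt)
    (μτ στ : ℝ)
    (hμτ : μτ = ∫ ω, Real.sign (X0 ω) * min |X0 ω| τt ∂μ)
    (hστ : στ = Real.sqrt (∫ ω, min (X0 ω ^ 2) (τt ^ 2) ∂μ)) :
    ENNReal.ofReal (1 - 2 * Real.exp (-t)) ≤
      μ {ω | |mhat ω - μτ| ≤ 1.75 * στ * Real.sqrt (t / n) ∧
             |mhat ω| ≤ (0.75 * στ + σ ^ 2 / στ) * Real.sqrt (t / n)} := by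
  have ht0 : 0 < t := by linarith
  have hn : (0 : ℝ) < n := pos_of_mul_pos_left (ht0.trans ht) ENNReal.toReal_nonneg
  have hv : ∫ ω, min (X0 ω ^ 2) (τt ^ 2) ∂μ = τt ^ 2 * (t / n) := by
    rw [div_eq_iff (by positivity)] at hτ
    linarith
  rw [hv, Real.sqrt_mul (sq_nonneg _), Real.sqrt_sq hτpos.le] at hστ
  simp_rw [sign_mul_min_abs_eq_truncate hτpos.le, one_div_mul_eq_div] at hmhat hμτ
  have htail := measureReal_abs_sum_truncate_sub_gt_le hindep hXm hident hτpos (1.75 * τt * t)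
  rw [Fintype.card_fin, ← hμτ, hv] at htail
  have hbias := abs_integral_truncate_mul_le hL2 hmean hτpos.le
  rw [← hμτ, ← hσ, hv] at hbias
  refine ofReal_one_sub_le_of_measureReal_compl_le
    ((measureReal_mono fun ω hω => ?_).trans (htail.trans_eq ?_))
  · by_contra! hsum
    refine hω ?_
    simpa only [Set.mem_ofPred_eq, hmhat, hστ] using
      truncated_mean_bounds_of_abs_sum_sub_le hn ht0 hτpos hbias (not_lt.mp hsum)
  · congr 2
    field_simp
    ring

/-- **Proposition A.1(i) (Chen–Zhou 2019): concentration of the truncated sample mean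
at the population tuning scale.**  Let `X₁, …, Xₙ` be i.i.d. copies of `X` with `E X = 0`
and `Var X = σ² > 0`, let `1 ≤ t < n P(|X| > 0)`, and let `τ_t > 0` solve
`E[min(X², τ²)]/τ² = t/n`.  Then with probability at least `1 − 2e^{−t}`, the truncated
sample mean `m̂ = (1/n) ∑ᵢ ψ_{τ_t}(Xᵢ)` satisfies both
`|m̂ − μ_{τ_t}| ≤ 1.75 σ_{τ_t} √(t/n)` and
`|m̂| ≤ (0.75 σ_{τ_t} + σ²/σ_{τ_t}) √(t/n)`, where `μ_τ = E ψ_τ(X)` and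
`σ_τ² = E ψ_τ²(X)` with `ψ_τ(u) = sign(u) min(|u|, τ)`. -/
theorem truncated_mean_concentration
    {Ω : Type*} [MeasurableSpace Ω] (μ : Measure Ω) [IsProbabilityMeasure μ]
    (n : ℕ) (X : Fin n → Ω → ℝ) (X0 : Ω → ℝ)
    (hX0 : Measurable X0) (hXm : ∀ i, Measurable (X i))
    (hindep : iIndepFun X μ)
    (hident : ∀ i, IdentDistrib (X i) X0 μ μ)
    (hL2 : MemLp X0 2 μ) (hmean : ∫ ω, X0 ω ∂μ = 0)
    (σ : ℝ) (hσpos : 0 < σ) (hσ : σ ^ 2 = ∫ ω, X0 ω ^ 2 ∂μ)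
    (t : ℝ) (ht1 : 1 ≤ t) (ht : t < (n : ℝ) * (μ {ω | 0 < |X0 ω|}).toReal)
    (τt : ℝ) (hτpos : 0 < τt)
    (hτ : (∫ ω, min (X0 ω ^ 2) (τt ^ 2) ∂μ) / τt ^ 2 = t / n)
    (mhat : Ω → ℝ)
    (hmhat : ∀ ω, mhat ω = (1 / (n : ℝ)) * ∑ i, Real.sign (X i ω) * min |X i ω| τt)
    (μτ στ : ℝ)
    (hμτ : μτ = ∫ ω, Real.sign (X0 ω) * min |X0 ω| τt ∂μ)
    (hστ : στ = Real.sqrt (∫ ω, min (X0 ω ^ 2) (τt ^ 2) ∂μ)) :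
    ENNReal.ofReal (1 - 2 * Real.exp (-t)) ≤
      μ {ω | |mhat ω - μτ| ≤ 1.75 * στ * Real.sqrt (t / n) ∧
             |mhat ω| ≤ (0.75 * στ + σ ^ 2 / στ) * Real.sqrt (t / n)} :=
  truncated_mean_concentration_general μ n X X0 hXm hindep hident hL2 hmean σ hσ t ht1 ht τt hτpos
    hτ mhat hmhat μτ στ hμτ hστ
end

section
/- Existence, uniqueness and bounds for the population tuning scale: let X be a real random variable with Var(X) < ∞ and set σ² = Var(X) (with E(X) = 0, so σ² = E(X²)). If 0 < t < n·P(|X| > 0), then the equation E[min(X², τ²)]/τ² = t/n has a unique solution τ_t in τ > 0, and it satisfies { E[min(X², q_{t/n}²)] }^{1/2}·√(n/t) ≤ τ_t ≤ σ·√(n/t), where q_α := inf{ z : P(|X| > z) ≤ α } is the upper α-quantile of |X|. -/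
/-!
The ratio `g(τ) = E[min(X², τ²)]/τ² = E[min(X²/τ², 1)]` is continuous and non-increasing on
`τ > 0`; by Markov's inequality it is at least `P(|X| ≥ τ)`, which tends to `P(|X| > 0) > t/n` as
`τ → 0`, while `g(τ) ≤ σ²/τ² → 0`, so the intermediate value theorem gives a root. If
`g(a) = g(b)` with `a < b`, the pointwise decrease is strict wherever `0 < |X| < b`, so almost
surely `X = 0` or `|X| ≥ b`, and then `g(a) ≥ P(|X| ≥ a) = P(|X| > 0) > t/n`: the root is unique.
At the root `τ_t`, Markov gives `P(|X| > τ_t) ≤ t/n`, hence `q_{t/n} ≤ τ_t`, and both bounds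
follow from `E[min(X², q²)] ≤ E[min(X², τ_t²)] = (t/n) τ_t² ≤ σ²`.
-/

open MeasureTheory Filter Set Topology

lemma min_sq_div_sq_le_of_le {x a b : ℝ} (ha : 0 < a) (hab : a ≤ b) :
    min (x ^ 2) (b ^ 2) / b ^ 2 ≤ min (x ^ 2) (a ^ 2) / a ^ 2 := by
  have hb : 0 < b := ha.trans_le hab
  rw [← min_div_div_right (by positivity), ← min_div_div_right (by positivity),
    div_self (by positivity), div_self (by positivity)]
  gcongr

lemma min_sq_div_sq_lt_of_lt {x a b : ℝ} (ha : 0 < a) (hab : a < b) (hx : x ≠ 0)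
    (hxb : |x| < b) : min (x ^ 2) (b ^ 2) / b ^ 2 < min (x ^ 2) (a ^ 2) / a ^ 2 := by
  have hb : 0 < b := ha.trans hab
  have hxb2 : x ^ 2 < b ^ 2 := sq_lt_sq' (abs_lt.1 hxb).1 (abs_lt.1 hxb).2
  rw [← min_div_div_right (by positivity), ← min_div_div_right (by positivity),
    div_self (by positivity), div_self (by positivity),
    min_eq_left ((div_lt_one (by positivity)).2 hxb2).le]
  exact lt_min (by gcongr) ((div_lt_one (by positivity)).2 hxb2)

section TuningRatio

variable {Ω : Type*} [MeasurableSpace Ω] {μ : Measure Ω} {X : Ω → ℝ}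

noncomputable def tuningRatio (μ : Measure Ω) (X : Ω → ℝ) (τ : ℝ) : ℝ :=
  (∫ ω, min (X ω ^ 2) (τ ^ 2) ∂μ) / τ ^ 2

noncomputable def upperQuantile (μ : Measure Ω) (X : Ω → ℝ) (α : ℝ) : ℝ :=
  sInf {z : ℝ | μ.real {ω | z < |X ω|} ≤ α}

lemma integrable_min_sq (hX2 : Integrable (fun ω ↦ X ω ^ 2) μ) (τ : ℝ) :
    Integrable (fun ω ↦ min (X ω ^ 2) (τ ^ 2)) μ :=
  hX2.mono' (hX2.aestronglyMeasurable.inf aestronglyMeasurable_const) <|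
    ae_of_all _ fun ω ↦ by
      rw [Real.norm_of_nonneg (by positivity)]
      exact min_le_left _ _

lemma integral_min_sq_le_integral_sq (hX2 : Integrable (fun ω ↦ X ω ^ 2) μ) (τ : ℝ) :
    ∫ ω, min (X ω ^ 2) (τ ^ 2) ∂μ ≤ ∫ ω, X ω ^ 2 ∂μ :=
  integral_mono (integrable_min_sq hX2 τ) hX2 fun _ ↦ min_le_left _ _

lemma continuous_integral_min_sq (hX2 : Integrable (fun ω ↦ X ω ^ 2) μ) :
    Continuous fun τ : ℝ ↦ ∫ ω, min (X ω ^ 2) (τ ^ 2) ∂μ :=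
  continuous_of_dominated (fun τ ↦ (integrable_min_sq hX2 _).aestronglyMeasurable)
    (fun τ ↦ ae_of_all _ fun ω ↦ by
      rw [Real.norm_of_nonneg (by positivity)]
      exact min_le_left _ _)
    hX2 (ae_of_all _ fun ω ↦ by fun_prop)

lemma continuousOn_tuningRatio (hX2 : Integrable (fun ω ↦ X ω ^ 2) μ) :
    ContinuousOn (tuningRatio μ X) (Ioi 0) :=
  (continuous_integral_min_sq hX2).continuousOn.div (by fun_prop) fun τ hτ ↦
    (pow_pos (mem_Ioi.1 hτ) 2).ne'

lemma tuningRatio_le_integral_sq_div (hX2 : Integrable (fun ω ↦ X ω ^ 2) μ) (τ : ℝ) :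
    tuningRatio μ X τ ≤ (∫ ω, X ω ^ 2 ∂μ) / τ ^ 2 := by
  unfold tuningRatio
  gcongr ?_ / _
  exact integral_min_sq_le_integral_sq hX2 τ

/-- Markov's inequality for `min(X², τ²)` at level `τ²`. -/
lemma measureReal_le_abs_le_tuningRatio (hX2 : Integrable (fun ω ↦ X ω ^ 2) μ) {τ : ℝ}
    (hτ : 0 < τ) : μ.real {ω | τ ≤ |X ω|} ≤ tuningRatio μ X τ := by
  have hmarkov := mul_meas_ge_le_integral_of_nonneg
    (ae_of_all μ fun ω ↦ by positivity) (integrable_min_sq hX2 τ) (τ ^ 2)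
  have hset : {ω | τ ^ 2 ≤ min (X ω ^ 2) (τ ^ 2)} = {ω | τ ≤ |X ω|} := by
    ext ω
    simp only [mem_ofPred_eq, le_min_iff, le_refl, and_true, ← sq_abs (X ω)]
    exact pow_le_pow_iff_left₀ hτ.le (abs_nonneg _) two_ne_zero
  rw [hset] at hmarkov
  rw [tuningRatio, le_div_iff₀ (by positivity), mul_comm]
  exact hmarkov

lemma exists_pos_lt_measureReal_le_abs [IsFiniteMeasure μ] {α : ℝ}
    (hα : α < μ.real {ω | 0 < |X ω|}) : ∃ c > 0, α < μ.real {ω | c ≤ |X ω|} := by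
  let s : ℕ → Set Ω := fun k ↦ {ω | 1 / (k + 1 : ℝ) ≤ |X ω|}
  have hmono : Monotone s := fun k l hkl ω (hω : _ ≤ _) ↦
    (show 1 / (l + 1 : ℝ) ≤ 1 / (k + 1) by gcongr).trans hω
  have hunion : ⋃ k, s k = {ω | 0 < |X ω|} := by
    ext ω
    simp only [s, mem_iUnion, mem_ofPred_eq]
    exact ⟨fun ⟨k, hk⟩ ↦ hk.trans_lt' Nat.one_div_pos_of_nat,
      fun h ↦ (exists_nat_one_div_lt h).imp fun _ ↦ le_of_lt⟩
  have hlim : Tendsto (fun k ↦ μ.real (s k)) atTop (𝓝 (μ.real {ω | 0 < |X ω|})) := by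
    rw [← hunion]
    exact (ENNReal.tendsto_toReal (measure_ne_top μ _)).comp (tendsto_measure_iUnion_atTop hmono)
  obtain ⟨k, hk⟩ := (hlim.eventually (eventually_gt_nhds hα)).exists
  exact ⟨1 / (k + 1), Nat.one_div_pos_of_nat, hk⟩

lemma exists_tuningRatio_eq [IsFiniteMeasure μ] (hX2 : Integrable (fun ω ↦ X ω ^ 2) μ) {α : ℝ}
    (hα : 0 < α) (hαX : α < μ.real {ω | 0 < |X ω|}) : ∃ τ > 0, tuningRatio μ X τ = α := by
  obtain ⟨c, hc, hαc⟩ := exists_pos_lt_measureReal_le_abs hαX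
  have hsmall : α < tuningRatio μ X c := hαc.trans_le (measureReal_le_abs_le_tuningRatio hX2 hc)
  have hdecay : Tendsto (fun τ : ℝ ↦ (∫ ω, X ω ^ 2 ∂μ) / τ ^ 2) atTop (𝓝 0) :=
    tendsto_const_nhds.div_atTop (tendsto_pow_atTop two_ne_zero)
  obtain ⟨T, hT, hTpos⟩ :=
    ((hdecay.eventually (gt_mem_nhds hα)).and (eventually_gt_atTop 0)).exists
  have hlarge : tuningRatio μ X T < α := (tuningRatio_le_integral_sq_div hX2 T).trans_lt hT
  obtain ⟨τ, hτ, hτα⟩ := isPreconnected_Ioi.intermediate_value hTpos hc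
    (continuousOn_tuningRatio hX2) ⟨hlarge.le, hsmall.le⟩
  exact ⟨τ, hτ, hτα⟩

lemma ae_eq_zero_or_le_abs_of_tuningRatio_eq (hX2 : Integrable (fun ω ↦ X ω ^ 2) μ) {a b : ℝ}
    (ha : 0 < a) (hab : a < b) (heq : tuningRatio μ X a = tuningRatio μ X b) :
    ∀ᵐ ω ∂μ, X ω = 0 ∨ b ≤ |X ω| := by
  let D : Ω → ℝ := fun ω ↦ min (X ω ^ 2) (a ^ 2) / a ^ 2 - min (X ω ^ 2) (b ^ 2) / b ^ 2
  have hia := (integrable_min_sq hX2 a).div_const (a ^ 2)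
  have hib := (integrable_min_sq hX2 b).div_const (b ^ 2)
  have hDzero : ∫ ω, D ω ∂μ = 0 := by
    rw [integral_sub hia hib, integral_div, integral_div]
    exact sub_eq_zero.2 heq
  have hD : D =ᵐ[μ] 0 := (integral_eq_zero_iff_of_nonneg
    (fun ω ↦ sub_nonneg.2 (min_sq_div_sq_le_of_le ha hab.le)) (hia.sub hib)).1 hDzero
  filter_upwards [hD] with ω hω
  by_contra! h
  exact (sub_pos.2 (min_sq_div_sq_lt_of_lt ha hab h.1 h.2)).ne' hω

/-- Beyond the flat part where it equals `P(X ≠ 0)`, `tuningRatio` is strictly decreasing. -/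
lemma eq_of_tuningRatio_eq [IsFiniteMeasure μ] (hX2 : Integrable (fun ω ↦ X ω ^ 2) μ)
    {a b : ℝ} (ha : 0 < a) (hb : 0 < b) (heq : tuningRatio μ X a = tuningRatio μ X b)
    (hlt : tuningRatio μ X a < μ.real {ω | 0 < |X ω|}) : a = b := by
  wlog hab : a < b generalizing a b
  · rcases (not_lt.1 hab).eq_or_lt with h | h
    · exact h.symm
    · exact (this hb ha heq.symm (heq ▸ hlt) h).symm
  have hsets : {ω | a ≤ |X ω|} =ᵐ[μ] {ω | 0 < |X ω|} := by
    filter_upwards [ae_eq_zero_or_le_abs_of_tuningRatio_eq hX2 ha hab heq] with ω hω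
    change (a ≤ |X ω|) = (0 < |X ω|)
    refine propext ⟨ha.trans_le, fun hX ↦ ?_⟩
    rcases hω with h | h
    · simp [h] at hX
    · exact hab.le.trans h
  have hmarkov := measureReal_le_abs_le_tuningRatio (μ := μ) hX2 ha
  rw [measureReal_congr hsets] at hmarkov
  exact absurd hmarkov hlt.not_ge

lemma existsUnique_tuningRatio_eq [IsFiniteMeasure μ] (hX2 : Integrable (fun ω ↦ X ω ^ 2) μ)
    {α : ℝ} (hα : 0 < α) (hαX : α < μ.real {ω | 0 < |X ω|}) :
    ∃! τ, 0 < τ ∧ tuningRatio μ X τ = α := by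
  obtain ⟨τ, hτ, hτα⟩ := exists_tuningRatio_eq hX2 hα hαX
  exact ⟨τ, ⟨hτ, hτα⟩, fun τ' ⟨hτ', hτ'α⟩ ↦
    eq_of_tuningRatio_eq hX2 hτ' hτ (hτ'α.trans hτα.symm) (hτ'α ▸ hαX)⟩

lemma nonneg_of_measureReal_lt_abs_le [IsFiniteMeasure μ] {α z : ℝ} (hα : α < μ.real univ)
    (hz : μ.real {ω | z < |X ω|} ≤ α) : 0 ≤ z := by
  by_contra! hz0
  have huniv : {ω | z < |X ω|} = univ := eq_univ_of_forall fun ω ↦ hz0.trans_le (abs_nonneg _)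
  rw [huniv] at hz
  exact hz.not_gt hα

lemma upperQuantile_nonneg [IsFiniteMeasure μ] {α : ℝ} (hα : α < μ.real univ) :
    0 ≤ upperQuantile μ X α :=
  Real.sInf_nonneg fun _ ↦ nonneg_of_measureReal_lt_abs_le hα

lemma upperQuantile_le [IsFiniteMeasure μ] {α τ : ℝ} (hα : α < μ.real univ)
    (hτ : μ.real {ω | τ < |X ω|} ≤ α) : upperQuantile μ X α ≤ τ :=
  csInf_le ⟨0, fun _ ↦ nonneg_of_measureReal_lt_abs_le hα⟩ hτ

lemma integral_min_sq_upperQuantile_le [IsFiniteMeasure μ]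
    (hX2 : Integrable (fun ω ↦ X ω ^ 2) μ) {α τ : ℝ} (hτ : 0 < τ) (hτα : tuningRatio μ X τ ≤ α)
    (hα : α < μ.real univ) :
    ∫ ω, min (X ω ^ 2) (upperQuantile μ X α ^ 2) ∂μ ≤ ∫ ω, min (X ω ^ 2) (τ ^ 2) ∂μ := by
  have htail : μ.real {ω | τ < |X ω|} ≤ α :=
    ((measureReal_mono fun ω (h : τ < _) ↦ h.le).trans
      (measureReal_le_abs_le_tuningRatio hX2 hτ)).trans hτα
  have hq : upperQuantile μ X α ^ 2 ≤ τ ^ 2 :=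
    pow_le_pow_left₀ (upperQuantile_nonneg hα) (upperQuantile_le hα htail) 2
  exact integral_mono (integrable_min_sq hX2 _) (integrable_min_sq hX2 _)
    fun ω ↦ min_le_min le_rfl hq

end TuningRatio

theorem population_tuning_scale_existsUnique_and_bounds_general
    {Ω : Type*} [MeasurableSpace Ω] (μ : Measure Ω) [IsProbabilityMeasure μ]
    (X : Ω → ℝ) (hL2 : MemLp X 2 μ)
    (σ : ℝ) (hσ0 : 0 ≤ σ) (hσ : σ ^ 2 = ∫ ω, X ω ^ 2 ∂μ)
    (n : ℕ) (t : ℝ) (ht0 : 0 < t)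
    (ht : t < (n : ℝ) * (μ {ω | 0 < |X ω|}).toReal) :
    (∃! τ : ℝ, 0 < τ ∧ (∫ ω, min (X ω ^ 2) (τ ^ 2) ∂μ) / τ ^ 2 = t / n) ∧
    ∀ τ : ℝ, 0 < τ → (∫ ω, min (X ω ^ 2) (τ ^ 2) ∂μ) / τ ^ 2 = t / n →
      Real.sqrt (∫ ω, min (X ω ^ 2)
            ((sInf {z : ℝ | (μ {ω | z < |X ω|}).toReal ≤ t / n}) ^ 2) ∂μ)
          * Real.sqrt ((n : ℝ) / t) ≤ τ
        ∧ τ ≤ σ * Real.sqrt ((n : ℝ) / t) := by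
  have hX2 := hL2.integrable_sq
  have hn : (0 : ℝ) < n := by
    by_contra! hn
    exact ht.not_ge (ht0.le.trans' (mul_nonpos_of_nonpos_of_nonneg hn ENNReal.toReal_nonneg))
  have hα : 0 < t / n := div_pos ht0 hn
  have hαX : t / n < μ.real {ω | 0 < |X ω|} := (div_lt_iff₀' hn).2 ht
  refine ⟨existsUnique_tuningRatio_eq hX2 hα hαX, fun τ hτ hτα ↦ ?_⟩
  have hτ2 : 0 < τ ^ 2 := by positivity
  have hroot : ∫ ω, min (X ω ^ 2) (τ ^ 2) ∂μ = t / n * τ ^ 2 := (div_eq_iff hτ2.ne').1 hτα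
  have hcancel : t / n * τ ^ 2 * (n / t) = τ ^ 2 := by field_simp
  constructor
  · have hq := (integral_min_sq_upperQuantile_le hX2 hτ hτα.le
      (hαX.trans_le (measureReal_mono (subset_univ _)))).trans_eq hroot
    rw [← Real.sqrt_mul' _ (by positivity), Real.sqrt_le_left hτ.le, ← hcancel]
    exact mul_le_mul_of_nonneg_right hq (by positivity)
  · have hupper : t / n * τ ^ 2 ≤ σ ^ 2 :=
      hσ ▸ hroot ▸ integral_min_sq_le_integral_sq hX2 τ
    rw [← Real.sqrt_sq hσ0, ← Real.sqrt_mul (sq_nonneg σ), Real.le_sqrt hτ.le (by positivity),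
      ← hcancel]
    exact mul_le_mul_of_nonneg_right hupper (by positivity)

/-- **Proposition A.2(i) (Chen–Zhou 2019): existence, uniqueness and bounds for the
population tuning scale.**  Let `X` be a real random variable with finite variance,
`E X = 0` and `σ² = E X²`.  If `0 < t < n · P(|X| > 0)`, then the equation
`E[min(X², τ²)]/τ² = t/n` has a unique solution `τ_t > 0`, and it satisfies
`(E[min(X², q_{t/n}²)])^{1/2} √(n/t) ≤ τ_t ≤ σ √(n/t)`, where
`q_α = inf{z : P(|X| > z) ≤ α}` is the upper `α`-quantile of `|X|`. -/
theorem population_tuning_scale_existsUnique_and_bounds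
    {Ω : Type*} [MeasurableSpace Ω] (μ : Measure Ω) [IsProbabilityMeasure μ]
    (X : Ω → ℝ) (hX : Measurable X) (hL2 : MemLp X 2 μ)
    (hmean : ∫ ω, X ω ∂μ = 0)
    (σ : ℝ) (hσ0 : 0 ≤ σ) (hσ : σ ^ 2 = ∫ ω, X ω ^ 2 ∂μ)
    (n : ℕ) (t : ℝ) (ht0 : 0 < t)
    (ht : t < (n : ℝ) * (μ {ω | 0 < |X ω|}).toReal) :
    (∃! τ : ℝ, 0 < τ ∧ (∫ ω, min (X ω ^ 2) (τ ^ 2) ∂μ) / τ ^ 2 = t / n) ∧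
    ∀ τ : ℝ, 0 < τ → (∫ ω, min (X ω ^ 2) (τ ^ 2) ∂μ) / τ ^ 2 = t / n →
      Real.sqrt (∫ ω, min (X ω ^ 2)
            ((sInf {z : ℝ | (μ {ω | z < |X ω|}).toReal ≤ t / n}) ^ 2) ∂μ)
          * Real.sqrt ((n : ℝ) / t) ≤ τ
        ∧ τ ≤ σ * Real.sqrt ((n : ℝ) / t) :=
  population_tuning_scale_existsUnique_and_bounds_general μ X hL2 σ hσ0 hσ n t ht0 ht
end

section
/- Existence and uniqueness of the empirical tuning scale: let x₁,…,xₙ be real numbers and let 0 < t < Σ_{i=1}^n 1{|x_i| > 0}. Then the equation (1/n) Σ_{i=1}^n min(x_i², τ²)/τ² = t/n has a unique solution in τ > 0. -/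
open Finset Filter Topology Set

/-! The function `g τ = ∑ᵢ min(xᵢ², τ²)/τ² = ∑ᵢ min(xᵢ²/τ², 1)` is continuous on `τ > 0`, equals the
number `N` of nonzero `xᵢ` for `τ` below every nonzero `|xᵢ|`, and tends to `0` as `τ → ∞`, so it
takes every value in `(0, N)`. Each summand is antitone, and strictly decreasing in `τ` once
`τ > |xᵢ| > 0`; hence `g` is strictly decreasing wherever `g τ ≠ N`, which gives uniqueness. -/

section ClippedRatio

variable {c σ τ : ℝ}

lemma min_div_sq_eq_one (hτ : τ ≠ 0) (h : τ ^ 2 ≤ c) : min c (τ ^ 2) / τ ^ 2 = 1 := by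
  rw [min_eq_right h, div_self (pow_ne_zero 2 hτ)]

lemma min_div_sq_le_min_div_sq (hc : 0 ≤ c) (hσ : 0 < σ) (hστ : σ ≤ τ) :
    min c (τ ^ 2) / τ ^ 2 ≤ min c (σ ^ 2) / σ ^ 2 := by
  have hσ2 : 0 < σ ^ 2 := by positivity
  have hστ2 : σ ^ 2 ≤ τ ^ 2 := by gcongr
  rw [← min_div_div_right hσ2.le, ← min_div_div_right (hσ2.trans_le hστ2).le,
    div_self hσ2.ne', div_self (hσ2.trans_le hστ2).ne']
  gcongr

lemma min_div_sq_lt_min_div_sq (hc : 0 < c) (hσ : 0 < σ) (hστ : σ < τ) (hcτ : c < τ ^ 2) :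
    min c (τ ^ 2) / τ ^ 2 < min c (σ ^ 2) / σ ^ 2 := by
  have hσ2 : 0 < σ ^ 2 := by positivity
  have hστ2 : σ ^ 2 < τ ^ 2 := by gcongr
  rw [← min_div_div_right hσ2.le, min_eq_left hcτ.le, div_self hσ2.ne']
  exact lt_min (div_lt_div_of_pos_left hc hσ2 hστ2) ((div_lt_one (hσ2.trans hστ2)).2 hcτ)

lemma continuousOn_min_div_sq (c : ℝ) :
    ContinuousOn (fun τ : ℝ => min c (τ ^ 2) / τ ^ 2) (Ioi 0) :=
  ContinuousOn.div (by fun_prop) (by fun_prop) fun τ hτ => pow_ne_zero 2 (ne_of_gt hτ)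

lemma tendsto_min_div_sq_atTop (c : ℝ) :
    Tendsto (fun τ : ℝ => min c (τ ^ 2) / τ ^ 2) atTop (𝓝 0) := by
  have hlim : Tendsto (fun τ : ℝ => c / τ ^ 2) atTop (𝓝 0) :=
    (tendsto_pow_atTop two_ne_zero).const_div_atTop c
  refine hlim.congr' ?_
  filter_upwards [(tendsto_pow_atTop (α := ℝ) two_ne_zero).eventually_ge_atTop c] with τ hτ
  rw [min_eq_left hτ]

end ClippedRatio

section TuningSum

variable {ι : Type*} [Fintype ι] (x : ι → ℝ)

noncomputable def tuningSum (τ : ℝ) : ℝ := ∑ i, min (x i ^ 2) (τ ^ 2) / τ ^ 2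

variable {x} {σ τ t : ℝ}

lemma tuningSum_eq_card (hτ : 0 < τ) (h : ∀ i, 0 < |x i| → τ ≤ |x i|) :
    tuningSum x τ = #{i | 0 < |x i|} := by
  rw [natCast_card_filter]
  refine sum_congr rfl fun i _ => ?_
  split_ifs with hi
  · exact min_div_sq_eq_one hτ.ne' (sq_le_sq.2 (by simpa [abs_of_pos hτ] using h i hi))
  · simp [abs_nonpos_iff.1 (not_lt.1 hi), sq_nonneg]

lemma tuningSum_strictAntiOn :
    StrictAntiOn (tuningSum x) {τ | 0 < τ ∧ tuningSum x τ ≠ #{i | 0 < |x i|}} := by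
  rintro σ ⟨hσ, -⟩ τ ⟨hτ, hτS⟩ hστ
  obtain ⟨j, hj, hjτ⟩ : ∃ j, 0 < |x j| ∧ |x j| < τ := by
    by_contra! h
    exact hτS (tuningSum_eq_card hτ h)
  refine sum_lt_sum (fun i _ => min_div_sq_le_min_div_sq (sq_nonneg _) hσ hστ.le)
    ⟨j, mem_univ j, min_div_sq_lt_min_div_sq (sq_abs (x j) ▸ pow_pos hj 2) hσ hστ ?_⟩
  exact sq_lt_sq.2 (by rwa [abs_of_pos hτ])

lemma continuousOn_tuningSum : ContinuousOn (tuningSum x) (Ioi 0) := by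
  unfold tuningSum
  exact continuousOn_finsetSum _ fun i _ => continuousOn_min_div_sq _

lemma tendsto_tuningSum_atTop : Tendsto (tuningSum x) atTop (𝓝 0) := by
  unfold tuningSum
  simpa using tendsto_finsetSum univ fun i _ => tendsto_min_div_sq_atTop (x i ^ 2)

lemma tendsto_tuningSum_nhdsGT_zero :
    Tendsto (tuningSum x) (𝓝[>] 0) (𝓝 #{i | 0 < |x i|}) := by
  refine tendsto_const_nhds.congr' ?_
  have hsmall : ∀ᶠ τ in 𝓝[>] (0 : ℝ), ∀ i, 0 < |x i| → τ ≤ |x i| :=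
    eventually_all.2 fun i => by
      by_cases hi : 0 < |x i|
      · filter_upwards [Ioo_mem_nhdsGT hi] with τ hτ using fun _ => hτ.2.le
      · exact Eventually.of_forall fun τ h => absurd h hi
  filter_upwards [hsmall, self_mem_nhdsWithin] with τ hτ hτ0
  exact (tuningSum_eq_card hτ0 hτ).symm

theorem existsUnique_tuningSum_eq (ht0 : 0 < t) (ht : t < #{i | 0 < |x i|}) :
    ∃! τ, 0 < τ ∧ tuningSum x τ = t := by
  obtain ⟨τ, hτ, hτt⟩ : t ∈ tuningSum x '' Ioi 0 :=
    isPreconnected_Ioi.intermediate_value_Ioo (l₂ := 𝓝[>] 0)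
      (le_principal_iff.2 (Ioi_mem_atTop 0)) inf_le_right continuousOn_tuningSum
      tendsto_tuningSum_atTop tendsto_tuningSum_nhdsGT_zero ⟨ht0, ht⟩
  refine ⟨τ, ⟨hτ, hτt⟩, fun σ ⟨hσ, hσt⟩ =>
    tuningSum_strictAntiOn.injOn ?_ ?_ (hσt.trans hτt.symm)⟩
  · exact ⟨hσ, hσt ▸ ht.ne⟩
  · exact ⟨hτ, hτt ▸ ht.ne⟩

end TuningSum

/-- **Proposition A.3 (Chen–Zhou 2019): existence and uniqueness of the empirical tuning
scale.**  For real numbers `x₁, …, xₙ` and `0 < t < #{i : |xᵢ| > 0}`, the equation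
`(1/n) ∑ᵢ min(xᵢ², τ²)/τ² = t/n` has a unique solution in `τ > 0`. -/
theorem empirical_tuning_scale_existsUnique
    (n : ℕ) (x : Fin n → ℝ) (t : ℝ) (ht0 : 0 < t)
    (ht : t < ((Finset.univ.filter fun i => 0 < |x i|).card : ℝ)) :
    ∃! τ : ℝ, 0 < τ ∧
      (1 / (n : ℝ)) * ∑ i, min (x i ^ 2) (τ ^ 2) / τ ^ 2 = t / n := by
  have hn : (0 : ℝ) < n := by
    simpa using (ht0.trans ht).trans_le (Nat.cast_le.2 (card_le_univ _))
  have hscale : ∀ s : ℝ, 1 / (n : ℝ) * s = t / n ↔ s = t := fun s => by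
    rw [one_div_mul_eq_div, div_left_inj' hn.ne']
  simpa only [hscale, tuningSum] using existsUnique_tuningSum_eq ht0 ht
end
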